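/- arXiv:2601.12064 — 3 statements merged into one kernel-verified Lean document; each statement's English description precedes it below -/
import Mathlib

section
/- For a distribution function F on ℝ with left-continuous inverse F⁻¹ and a probability level p ∈ (0,1) with ∫_p^1 F⁻¹(u) du < ∞, the Tail Value-at-Risk T_p = (1/(1-p)) ∫_p^1 F⁻¹(u) du satisfies T_p = (1/(1-p)) [ E(X · 1{X > ξ_p}) + ξ_p · (F(ξ_p) - p) ], where ξ_p = F⁻¹(p) and X is a random variable with distribution function F. -/
/-!
Split `∫_p^1 F⁻¹` at `q = F(ξ_p) ≥ p`. On `(p, q)` the quantile function is constant, equal to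
`ξ_p`, which gives `ξ_p (F(ξ_p) - p)`. On `(q, 1)` one has `F⁻¹(u) > ξ_p ↔ u > F(ξ_p)`, and `F⁻¹`
pushes Lebesgue measure on `(0, 1)` forward to the law of `X`, so `∫_q^1 F⁻¹ = E(X 1{X > ξ_p})`.
-/

open MeasureTheory Set Filter Topology

namespace ProbabilityTheory

/-- The Galois connection characterising the left-continuous inverse of `cdf ν` on `(0, 1)`. -/
def IsQuantileFunction (ν : Measure ℝ) (Q : ℝ → ℝ) : Prop :=
  ∀ u ∈ Ioo (0 : ℝ) 1, ∀ x, Q u ≤ x ↔ u ≤ cdf ν x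

theorem isQuantileFunction_sInf (ν : Measure ℝ) [IsProbabilityMeasure ν] :
    IsQuantileFunction ν fun u ↦ sInf {x | u ≤ cdf ν x} := by
  intro u hu x
  set S := {y | u ≤ cdf ν y}
  have hne : S.Nonempty := ((tendsto_cdf_atTop ν).eventually (eventually_ge_nhds hu.2)).exists
  have hbdd : BddBelow S := by
    obtain ⟨y, hy⟩ := ((tendsto_cdf_atBot ν).eventually (eventually_lt_nhds hu.1)).exists
    refine ⟨y, fun z hz ↦ le_of_not_ge fun hzy ↦ ?_⟩
    exact (hz.trans (monotone_cdf ν hzy)).not_gt hy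
  -- right continuity of `cdf ν` makes `S` closed from the left, so it contains its infimum
  have hmem : sInf S ∈ S := by
    have : (𝓝[S] sInf S).NeBot :=
      mem_closure_iff_nhdsWithin_neBot.mp (csInf_mem_closure hne hbdd)
    have hc : ContinuousWithinAt (cdf ν) S (sInf S) :=
      ((cdf ν).right_continuous _).mono fun z hz ↦ csInf_le hbdd hz
    exact ge_of_tendsto hc self_mem_nhdsWithin
  exact ⟨fun h ↦ hmem.trans (monotone_cdf ν h), fun h ↦ csInf_le hbdd h⟩

theorem measurable_ite_lt_id (ξ : ℝ) : Measurable fun x : ℝ ↦ if ξ < x then x else 0 :=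
  Measurable.ite measurableSet_Ioi measurable_id measurable_const

namespace IsQuantileFunction

variable {ν : Measure ℝ} {Q : ℝ → ℝ}

theorem le_cdf (hQ : IsQuantileFunction ν Q) {u : ℝ} (hu : u ∈ Ioo (0 : ℝ) 1) : u ≤ cdf ν (Q u) :=
  (hQ u hu _).mp le_rfl

theorem lt_iff (hQ : IsQuantileFunction ν Q) {u : ℝ} (hu : u ∈ Ioo (0 : ℝ) 1) (x : ℝ) :
    x < Q u ↔ cdf ν x < u :=
  not_iff_not.mp (by simpa only [not_lt] using hQ u hu x)

theorem monotoneOn (hQ : IsQuantileFunction ν Q) : MonotoneOn Q (Ioo 0 1) :=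
  fun _ hu _ hv huv ↦ (hQ _ hu _).mpr (huv.trans (hQ.le_cdf hv))

theorem eqOn_Ioo (hQ : IsQuantileFunction ν Q) {p : ℝ} (hp : p ∈ Ioo (0 : ℝ) 1) :
    EqOn Q (fun _ ↦ Q p) (Ioo p (cdf ν (Q p))) := by
  intro u ⟨hpu, huq⟩
  have hu : u ∈ Ioo (0 : ℝ) 1 := ⟨hp.1.trans hpu, huq.trans_le (cdf_le_one ν _)⟩
  exact le_antisymm ((hQ u hu _).mpr huq.le) (hQ.monotoneOn hp hu hpu.le)

theorem aemeasurable (hQ : IsQuantileFunction ν Q) : AEMeasurable Q (volume.restrict (Ioo 0 1)) :=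
  aemeasurable_restrict_of_monotoneOn measurableSet_Ioo hQ.monotoneOn

theorem map_volume (hQ : IsQuantileFunction ν Q) [IsProbabilityMeasure ν] :
    (volume.restrict (Ioo 0 1)).map Q = ν := by
  have : IsFiniteMeasure ((volume.restrict (Ioo (0 : ℝ) 1)).map Q) := by
    constructor
    rw [Measure.map_apply_of_aemeasurable hQ.aemeasurable MeasurableSet.univ]
    simp [Real.volume_Ioo]
  refine Measure.ext_of_Iic _ _ fun x ↦ ?_
  have hpre : Q ⁻¹' Iic x ∩ Ioo 0 1 = Iic (cdf ν x) ∩ Ioo 0 1 := by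
    ext u
    simp only [mem_inter_iff, mem_preimage, mem_Iic, and_congr_left_iff]
    exact fun hu ↦ hQ u hu x
  rw [Measure.map_apply_of_aemeasurable hQ.aemeasurable measurableSet_Iic,
    Measure.restrict_apply' measurableSet_Ioo, hpre,
    measure_congr (EventuallyEq.rfl.inter Ioo_ae_eq_Ioc),
    Iic_inter_Ioc_of_le (cdf_le_one ν x), Real.volume_Ioc, sub_zero, ofReal_cdf]

theorem integral_comp (hQ : IsQuantileFunction ν Q) [IsProbabilityMeasure ν] {g : ℝ → ℝ}
    (hg : AEStronglyMeasurable g ν) :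
    ∫ u in Ioo 0 1, g (Q u) = ∫ x, g x ∂ν := by
  rw [← integral_map hQ.aemeasurable (hQ.map_volume ▸ hg), hQ.map_volume]

theorem intervalIntegral_to_cdf_eq_mul (hQ : IsQuantileFunction ν Q) {p : ℝ}
    (hp : p ∈ Ioo (0 : ℝ) 1) :
    ∫ u in p..cdf ν (Q p), Q u = Q p * (cdf ν (Q p) - p) := by
  rw [intervalIntegral.integral_of_le (hQ.le_cdf hp), integral_Ioc_eq_integral_Ioo,
    setIntegral_congr_fun measurableSet_Ioo (hQ.eqOn_Ioo hp), setIntegral_const,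
    Real.volume_real_Ioo_of_le (hQ.le_cdf hp), smul_eq_mul, mul_comm]

theorem intervalIntegral_cdf_one (hQ : IsQuantileFunction ν Q) [IsProbabilityMeasure ν] (ξ : ℝ) :
    ∫ u in cdf ν ξ..1, Q u = ∫ x, (if ξ < x then x else 0) ∂ν := by
  have hind : EqOn (fun u ↦ if ξ < Q u then Q u else 0) ((Ioi (cdf ν ξ)).indicator Q)
      (Ioo 0 1) := by
    intro u hu
    simp only [indicator, mem_Ioi, hQ.lt_iff hu]
  rw [← hQ.integral_comp (measurable_ite_lt_id ξ).aestronglyMeasurable,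
    setIntegral_congr_fun measurableSet_Ioo hind,
    setIntegral_indicator measurableSet_Ioi, Ioo_inter_Ioi, max_eq_right (cdf_nonneg ν ξ),
    intervalIntegral.integral_of_le (cdf_le_one ν ξ), integral_Ioc_eq_integral_Ioo]

end IsQuantileFunction

end ProbabilityTheory

open ProbabilityTheory

theorem stmt0_general {Ω : Type*} [MeasurableSpace Ω] (μ : Measure Ω) [IsProbabilityMeasure μ]
    (X : Ω → ℝ) (hX : Measurable X)
    (F : ℝ → ℝ) (hF : ∀ x, F x = (μ {ω | X ω ≤ x}).toReal)
    (Finv : ℝ → ℝ) (hFinv : ∀ u ∈ Set.Ioo (0:ℝ) 1, Finv u = sInf {x | u ≤ F x})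
    (p : ℝ) (hp : p ∈ Set.Ioo (0:ℝ) 1)
    (hIntFinv : IntervalIntegrable Finv volume p 1) :
    (1/(1-p)) * ∫ u in p..1, Finv u
      = (1/(1-p)) * ((∫ ω, (if Finv p < X ω then X ω else 0) ∂μ)
          + Finv p * (F (Finv p) - p)) := by
  set ν := μ.map X
  have : IsProbabilityMeasure ν := Measure.isProbabilityMeasure_map hX.aemeasurable
  have hFν : F = cdf ν := by
    ext x
    rw [hF, cdf_eq_real, measureReal_def, Measure.map_apply hX measurableSet_Iic]
    rfl
  subst hFν
  have hQ : IsQuantileFunction ν Finv := fun u hu ↦ hFinv u hu ▸ isQuantileFunction_sInf ν u hu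
  have hq : cdf ν (Finv p) ∈ uIcc p 1 := by
    rw [uIcc_of_le hp.2.le]
    exact ⟨hQ.le_cdf hp, cdf_le_one ν _⟩
  rw [← intervalIntegral.integral_add_adjacent_intervals
      (hIntFinv.mono_set (uIcc_subset_uIcc_left hq))
      (hIntFinv.mono_set (uIcc_subset_uIcc_right hq)),
    hQ.intervalIntegral_to_cdf_eq_mul hp, hQ.intervalIntegral_cdf_one,
    integral_map hX.aemeasurable (measurable_ite_lt_id _).aestronglyMeasurable, add_comm]

/-- For a distribution function `F` of a random variable `X` with
left-continuous inverse `Finv` and probability level `p ∈ (0,1)` with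
`∫_p^1 Finv` finite, the TVaR `T_p = (1/(1-p)) ∫_p^1 Finv u du` satisfies
`T_p = (1/(1-p)) (E(X ⬝ 1{X > ξ_p}) + ξ_p (F ξ_p - p))` where `ξ_p = Finv p`. -/
theorem stmt0 {Ω : Type*} [MeasurableSpace Ω] (μ : Measure Ω) [IsProbabilityMeasure μ]
    (X : Ω → ℝ) (hX : Measurable X)
    (F : ℝ → ℝ) (hF : ∀ x, F x = (μ {ω | X ω ≤ x}).toReal)
    (Finv : ℝ → ℝ) (hFinv : ∀ u ∈ Set.Ioo (0:ℝ) 1, Finv u = sInf {x | u ≤ F x})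
    (p : ℝ) (hp : p ∈ Set.Ioo (0:ℝ) 1)
    (hIntFinv : IntervalIntegrable Finv volume p 1)
    (hIntX : Integrable (fun ω => if Finv p < X ω then X ω else 0) μ) :
    (1/(1-p)) * ∫ u in p..1, Finv u
      = (1/(1-p)) * ((∫ ω, (if Finv p < X ω then X ω else 0) ∂μ)
          + Finv p * (F (Finv p) - p)) :=
  stmt0_general μ X hX F hF Finv hFinv p hp hIntFinv
end

section
/- If the quantile function F⁻¹ is continuous at p (equivalently F(ξ_p) = p where ξ_p = F⁻¹(p)), then the Tail Value-at-Risk T_p = (1/(1-p)) ∫_p^1 F⁻¹(u) du equals the tail conditional expectation E(X | X > ξ_p). -/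
/-!
Write `ξ = Q p` for the quantile function `Q u = inf {x | u ≤ F x}`. By right continuity of `F`,
`Q u ≤ y ↔ u ≤ F y` for `u ∈ (0, 1)`, so when `F ξ = p` the set of `u ∈ (p, 1)` with
`Q u > ξ + t` is the interval `(F (ξ + t), 1)`, of length `P(X > ξ + t)`, for every `t > 0`.
The nonnegative functions `Q - ξ` on `(p, 1)` and `X - ξ` on `{X > ξ}` therefore have the same
tails, hence the same integral by the layer cake formula; adding back `ξ (1 - p)` to both sides
gives `∫_p^1 Q = E[X; X > ξ]`, and `P(X > ξ) = 1 - F ξ = 1 - p`.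
-/

open MeasureTheory Set Filter ProbabilityTheory

theorem MeasureTheory.integral_eq_integral_of_measure_lt_eq {α β : Type*} [MeasurableSpace α]
    [MeasurableSpace β] {μ : Measure α} {ν : Measure β} {f : α → ℝ} {g : β → ℝ}
    (hf : 0 ≤ᵐ[μ] f) (hg : 0 ≤ᵐ[ν] g) (hfm : AEMeasurable f μ) (hgm : AEMeasurable g ν)
    (h : ∀ t > 0, μ {a | t < f a} = ν {b | t < g b}) :
    ∫ a, f a ∂μ = ∫ b, g b ∂ν := by
  rw [integral_eq_lintegral_of_nonneg_ae hf hfm.aestronglyMeasurable,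
    integral_eq_lintegral_of_nonneg_ae hg hgm.aestronglyMeasurable,
    lintegral_eq_lintegral_meas_lt μ hf hfm, lintegral_eq_lintegral_meas_lt ν hg hgm,
    setLIntegral_congr_fun measurableSet_Ioi h]

theorem MeasureTheory.integrableOn_map_iff_of_measurable {α β E : Type*} [MeasurableSpace α]
    [MeasurableSpace β] [NormedAddCommGroup E] {μ : Measure α} {X : α → β} (hX : Measurable X)
    {s : Set β} (hs : MeasurableSet s) {f : β → E} (hf : AEStronglyMeasurable f (μ.map X)) :
    IntegrableOn f s (μ.map X) ↔ IntegrableOn (f ∘ X) (X ⁻¹' s) μ := by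
  have hf' := hf.restrict (s := s)
  rw [Measure.restrict_map hX hs] at hf'
  rw [IntegrableOn, Measure.restrict_map hX hs, integrable_map_measure hf' hX.aemeasurable,
    IntegrableOn]

namespace ProbabilityTheory

variable (ν : Measure ℝ)

/-- The left-continuous inverse of `cdf ν`; outside `(0, 1)` the set is empty or unbounded below
and `sInf` returns the junk value `0`. -/
noncomputable def quantile (u : ℝ) : ℝ := sInf {x | u ≤ cdf ν x}

theorem quantile_le_iff {u : ℝ} (hu : u ∈ Ioo 0 1) (y : ℝ) :
    quantile ν u ≤ y ↔ u ≤ cdf ν y := by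
  set S := {x | u ≤ cdf ν x}
  have hne : S.Nonempty := ((tendsto_cdf_atTop ν).eventually (eventually_ge_nhds hu.2)).exists
  have hbdd : BddBelow S := by
    obtain ⟨a, ha⟩ :=
      eventually_atBot.1 ((tendsto_cdf_atBot ν).eventually (eventually_lt_nhds hu.1))
    exact ⟨a, fun x hx => le_of_not_gt fun hxa => (ha x hxa.le).not_ge hx⟩
  refine ⟨fun hQ => ?_, fun hy => csInf_le hbdd hy⟩
  -- right continuity of the cdf makes `S` closed, so it contains its infimum
  have hmem : quantile ν u ∈ S := by
    have hcl := ((cdf ν).right_continuous (sInf S)).mono (fun x hx => csInf_le hbdd hx)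
      |>.mem_closure_image (csInf_mem_closure hne hbdd)
    exact closure_minimal (image_subset_iff.2 fun x hx => hx) isClosed_Ici hcl
  exact hmem.trans (monotone_cdf ν hQ)

theorem lt_quantile_iff {u : ℝ} (hu : u ∈ Ioo 0 1) (y : ℝ) :
    y < quantile ν u ↔ cdf ν y < u := by
  simpa only [not_le] using (quantile_le_iff ν hu y).not

theorem quantile_le_quantile {p u : ℝ} (hp : p ∈ Ioo 0 1) (hu : u ∈ Ioo 0 1) (hpu : p ≤ u) :
    quantile ν p ≤ quantile ν u :=
  (quantile_le_iff ν hp _).2 <| hpu.trans <| (quantile_le_iff ν hu _).1 le_rfl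

theorem Ioo_inter_lt_quantile {p y : ℝ} (hp : 0 ≤ p) (hy : p ≤ cdf ν y) :
    Ioo p 1 ∩ {u | y < quantile ν u} = Ioo (cdf ν y) 1 := by
  ext u
  constructor
  · rintro ⟨hu, hyu⟩
    exact ⟨(lt_quantile_iff ν ⟨hp.trans_lt hu.1, hu.2⟩ y).1 hyu, hu.2⟩
  · intro hu
    have hpu : p < u := hy.trans_lt hu.1
    exact ⟨⟨hpu, hu.2⟩, (lt_quantile_iff ν ⟨hp.trans_lt hpu, hu.2⟩ y).2 hu.1⟩

variable [IsProbabilityMeasure ν]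

theorem measure_Ioi_eq_ofReal_one_sub_cdf (y : ℝ) :
    ν (Ioi y) = ENNReal.ofReal (1 - cdf ν y) := by
  rw [← compl_Iic, prob_compl_eq_one_sub measurableSet_Iic, ← ofReal_cdf,
    ENNReal.ofReal_sub _ (cdf_nonneg ν y), ENNReal.ofReal_one]

theorem measureReal_Ioi_eq_one_sub_cdf (y : ℝ) : ν.real (Ioi y) = 1 - cdf ν y := by
  rw [measureReal_def, measure_Ioi_eq_ofReal_one_sub_cdf,
    ENNReal.toReal_ofReal (sub_nonneg.2 (cdf_le_one ν y))]

theorem volume_Ioo_inter_lt_quantile {p y : ℝ} (hp : 0 ≤ p) (hy : p ≤ cdf ν y) :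
    volume (Ioo p 1 ∩ {u | y < quantile ν u}) = ν (Ioi y) := by
  rw [Ioo_inter_lt_quantile ν hp hy, Real.volume_Ioo, measure_Ioi_eq_ofReal_one_sub_cdf]

theorem setIntegral_Ioo_quantile_eq_setIntegral_Ioi {p : ℝ} (hp : p ∈ Ioo 0 1)
    (hcdf : cdf ν (quantile ν p) = p) (hQ : IntegrableOn (quantile ν) (Ioo p 1))
    (hν : IntegrableOn (fun x => x) (Ioi (quantile ν p)) ν) :
    ∫ u in Ioo p 1, quantile ν u = ∫ x in Ioi (quantile ν p), x ∂ν := by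
  set ξ := quantile ν p
  have hshift : ∫ u in Ioo p 1, (quantile ν u - ξ) = ∫ x in Ioi ξ, (x - ξ) ∂ν := by
    refine integral_eq_integral_of_measure_lt_eq ?_ ?_ (hQ.aemeasurable.sub_const ξ)
      (aemeasurable_id.sub_const ξ) fun t ht => ?_
    · refine ae_restrict_of_forall_mem measurableSet_Ioo fun u hu => ?_
      exact sub_nonneg.2 (quantile_le_quantile ν hp ⟨hp.1.trans hu.1, hu.2⟩ hu.1.le)
    · exact ae_restrict_of_forall_mem measurableSet_Ioi fun x hx => sub_nonneg.2 hx.le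
    · have hpt : p ≤ cdf ν (ξ + t) := hcdf ▸ monotone_cdf ν (by linarith)
      simp only [lt_sub_iff_add_lt']
      rw [Measure.restrict_apply' measurableSet_Ioo, Measure.restrict_apply' measurableSet_Ioi,
        inter_comm, volume_Ioo_inter_lt_quantile ν hp.1.le hpt]
      exact congrArg ν (inter_eq_left.2 (Ioi_subset_Ioi (by linarith))).symm
  have hvol : volume.real (Ioo p 1) = 1 - p := Real.volume_real_Ioo_of_le hp.2.le
  have htail : ν.real (Ioi ξ) = 1 - p := by rw [measureReal_Ioi_eq_one_sub_cdf, hcdf]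
  rw [integral_sub hQ (integrableOn_const (by simp)),
    integral_sub hν (integrableOn_const (by simp)), setIntegral_const, setIntegral_const, hvol,
    htail] at hshift
  linarith

end ProbabilityTheory

theorem stmt1_general {Ω : Type*} [MeasurableSpace Ω] (μ : Measure Ω) [IsProbabilityMeasure μ]
    (X : Ω → ℝ) (hX : Measurable X)
    (F : ℝ → ℝ) (hF : ∀ x, F x = (μ {ω | X ω ≤ x}).toReal)
    (Finv : ℝ → ℝ) (hFinv : ∀ u ∈ Set.Ioo (0:ℝ) 1, Finv u = sInf {x | u ≤ F x})
    (p : ℝ) (hp : p ∈ Set.Ioo (0:ℝ) 1)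
    (hIntFinv : IntervalIntegrable Finv volume p 1)
    (hIntX : Integrable (fun ω => if Finv p < X ω then X ω else 0) μ)
    (hcont : F (Finv p) = p) :
    (1/(1-p)) * ∫ u in p..1, Finv u
      = (∫ ω in {ω | Finv p < X ω}, X ω ∂μ) / (μ {ω | Finv p < X ω}).toReal := by
  set ν := μ.map X
  have : IsProbabilityMeasure ν := Measure.isProbabilityMeasure_map hX.aemeasurable
  have hFν : F = cdf ν := funext fun x => by
    rw [hF, cdf_eq_real, map_measureReal_apply hX measurableSet_Iic]; rfl
  have hFinvν : EqOn Finv (quantile ν) (Ioo 0 1) := fun u hu => by rw [hFinv u hu, hFν]; rfl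
  have hξ : Finv p = quantile ν p := hFinvν hp
  have hEqOn : EqOn Finv (quantile ν) (Ioo p 1) := hFinvν.mono (Ioo_subset_Ioo_left hp.1.le)
  have hset : {ω | Finv p < X ω} = X ⁻¹' Ioi (quantile ν p) := by rw [hξ]; rfl
  have hQ : IntegrableOn (quantile ν) (Ioo p 1) :=
    (((intervalIntegrable_iff_integrableOn_Ioc_of_le hp.2.le).1 hIntFinv).mono_set
      Ioo_subset_Ioc_self).congr_fun hEqOn measurableSet_Ioo
  have hν : IntegrableOn (fun x => x) (Ioi (quantile ν p)) ν := by
    rw [integrableOn_map_iff_of_measurable hX measurableSet_Ioi (f := fun x => x)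
      aestronglyMeasurable_id, ← hset]
    exact (integrable_indicator_iff (hX measurableSet_Ioi)).1 hIntX
  calc (1/(1-p)) * ∫ u in p..1, Finv u = (∫ u in Ioo p 1, quantile ν u) / (1 - p) := by
        rw [intervalIntegral.integral_of_le hp.2.le, integral_Ioc_eq_integral_Ioo,
          setIntegral_congr_fun measurableSet_Ioo hEqOn, one_div_mul_eq_div]
    _ = (∫ x in Ioi (quantile ν p), x ∂ν) / ν.real (Ioi (quantile ν p)) := by
        have hcdf : cdf ν (quantile ν p) = p := by rw [← hξ, ← hFν, hcont]
        rw [setIntegral_Ioo_quantile_eq_setIntegral_Ioi ν hp hcdf hQ hν,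
          measureReal_Ioi_eq_one_sub_cdf, hcdf]
    _ = _ := by
        rw [setIntegral_map (f := fun x => x) measurableSet_Ioi aestronglyMeasurable_id
          hX.aemeasurable, map_measureReal_apply hX measurableSet_Ioi, ← hset, measureReal_def]

/-- If the quantile function `Finv` is continuous at `p`
(equivalently `F (ξ_p) = p` with `ξ_p = Finv p`), then the TVaR
`(1/(1-p)) ∫_p^1 Finv u du` equals the tail conditional expectation
`E(X | X > ξ_p) = (∫_{X > ξ_p} X) / P(X > ξ_p)`, where `P(X > ξ_p) = 1 - p > 0`. -/
theorem stmt1 {Ω : Type*} [MeasurableSpace Ω] (μ : Measure Ω) [IsProbabilityMeasure μ]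
    (X : Ω → ℝ) (hX : Measurable X)
    (F : ℝ → ℝ) (hF : ∀ x, F x = (μ {ω | X ω ≤ x}).toReal)
    (Finv : ℝ → ℝ) (hFinv : ∀ u ∈ Set.Ioo (0:ℝ) 1, Finv u = sInf {x | u ≤ F x})
    (p : ℝ) (hp : p ∈ Set.Ioo (0:ℝ) 1)
    (hIntFinv : IntervalIntegrable Finv volume p 1)
    (hIntX : Integrable (fun ω => if Finv p < X ω then X ω else 0) μ)
    (hcont : F (Finv p) = p)
    (htail : (μ {ω | Finv p < X ω}).toReal = 1 - p) :
    (1/(1-p)) * ∫ u in p..1, Finv u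
      = (∫ ω in {ω | Finv p < X ω}, X ω ∂μ) / (μ {ω | Finv p < X ω}).toReal :=
  stmt1_general μ X hX F hF Finv hFinv p hp hIntFinv hIntX hcont
end

section
/- (Deterministic version of Lemma 1 remainder nonnegativity.) Let X_{1:n} ≤ ⋯ ≤ X_{n:n} be order statistics of real numbers, p ∈ (0,1), ξ a real number, and N = card{i : X_i ≤ ξ}, so that X_{i:n} ≤ ξ for i ≤ N and X_{i:n} > ξ for i > N. Define R = ((np - ⌊np⌋)/(n(1-p))) (X_{⌊np⌋+1:n} - ξ) - (sign(N - ⌊np⌋)/(n(1-p))) Σ_{i=(⌊np⌋∧N)+1}^{⌊np⌋∨N} (X_{i:n} - ξ). Then R ≥ 0. -/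
open Finset

/-!
Write `k = ⌊np⌋` and `θ = np - k ∈ [0, 1)`, so that `n(1-p) R = θ (X_{k+1:n} - ξ) - sign(N - k) S`
with `S` the window sum. If `N ≤ k`, the window lies above `ξ`: `X_{k+1:n} - ξ > 0`, `S ≥ 0` and the
sign is `≤ 0`. If `N > k`, the window lies below `ξ` and starts at `X_{k+1:n}`, so
`S ≤ X_{k+1:n} - ξ ≤ 0` and `n(1-p) R ≥ (1 - θ)(ξ - X_{k+1:n}) ≥ 0`.
-/

lemma sum_window_le_first {n k N : ℕ} (f : Fin n → ℝ) (hf : ∀ i : Fin n, (i : ℕ) < N → f i ≤ 0)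
    (hk : k < n) (hkN : k < N) :
    ∑ i : Fin n, (if k ≤ (i : ℕ) ∧ (i : ℕ) < N then f i else 0) ≤ f ⟨k, hk⟩ := by
  rw [← sum_filter, ← add_sum_erase _ _ (a := ⟨k, hk⟩) (by simp [hkN])]
  refine add_le_of_nonpos_right (sum_nonpos fun i hi => hf i ?_)
  exact (mem_filter.1 (mem_of_mem_erase hi)).2.2

-- The 0-indexed `Y ⟨⌊np⌋, hk⟩` is `X_{⌊np⌋+1:n}`, and the window `min ⌊np⌋ N ≤ i < max ⌊np⌋ N`
-- is the 1-indexed range `(⌊np⌋ ∧ N) + 1 ≤ i ≤ ⌊np⌋ ∨ N`.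
theorem stmt6_general (n : ℕ) (p ξ : ℝ) (hp : p ∈ Set.Ioo (0:ℝ) 1)
    (Y : Fin n → ℝ)
    (N : ℕ)
    (hsort : ∀ i : Fin n, ((i : ℕ) < N → Y i ≤ ξ) ∧ (N ≤ (i : ℕ) → ξ < Y i))
    (hk : ⌊(n:ℝ) * p⌋₊ < n) (R : ℝ)
    (hR : R = (((n:ℝ) * p - ⌊(n:ℝ) * p⌋₊) / ((n:ℝ) * (1-p)))
            * (Y ⟨⌊(n:ℝ) * p⌋₊, hk⟩ - ξ)
        - ((((N : ℤ) - (⌊(n:ℝ) * p⌋₊ : ℤ)).sign : ℝ) / ((n:ℝ) * (1-p)))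
            * ∑ i : Fin n,
                (if min ⌊(n:ℝ) * p⌋₊ N ≤ (i:ℕ) ∧ (i:ℕ) < max ⌊(n:ℝ) * p⌋₊ N
                 then Y i - ξ else 0)) :
    0 ≤ R := by
  obtain ⟨hp0, hp1⟩ := hp
  set k := ⌊(n:ℝ) * p⌋₊
  have hn : (0:ℝ) < n := by exact_mod_cast (Nat.zero_le k).trans_lt hk
  have hθ0 : 0 ≤ (n:ℝ) * p - k := sub_nonneg.2 (Nat.floor_le (by positivity))
  have hθ1 : (n:ℝ) * p - k < 1 := by linarith [Nat.lt_floor_add_one ((n:ℝ) * p)]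
  rw [hR, div_mul_eq_mul_div, div_mul_eq_mul_div, ← sub_div]
  refine div_nonneg ?_ (mul_pos hn (sub_pos.2 hp1)).le
  rcases le_or_gt N k with hNk | hkN
  · have hA : 0 < Y ⟨k, hk⟩ - ξ := sub_pos.2 ((hsort _).2 hNk)
    have hsign : (((N : ℤ) - k).sign : ℝ) ≤ 0 :=
      Int.cast_nonpos.2 (Int.sign_nonpos_iff.2 (by omega))
    have hS : 0 ≤ ∑ i : Fin n, (if min k N ≤ (i:ℕ) ∧ (i:ℕ) < max k N then Y i - ξ else 0) :=
      sum_nonneg fun i _ => by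
        split_ifs with hi
        exacts [sub_nonneg.2 ((hsort i).2 (min_eq_right hNk ▸ hi.1)).le, le_rfl]
    nlinarith [mul_nonneg hθ0 hA.le]
  · have hsign : ((N : ℤ) - k).sign = 1 := Int.sign_eq_one_iff_pos.2 (by omega)
    have hS := sum_window_le_first (fun i => Y i - ξ) (fun i hi => sub_nonpos.2 ((hsort i).1 hi))
      hk hkN
    have hA : Y ⟨k, hk⟩ - ξ ≤ 0 := sub_nonpos.2 ((hsort _).1 hkN)
    rw [hsign, min_eq_left hkN.le, max_eq_right hkN.le, Int.cast_one, one_mul]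
    nlinarith [mul_nonneg (sub_nonneg.2 hθ1.le) (neg_nonneg.2 hA)]

/-- deterministic remainder nonnegativity, Lemma 1: with
`Y` the order statistics (0-indexed), `N = card {i : X_i ≤ ξ}` so that
`X_{i:n} ≤ ξ` for `i ≤ N` and `X_{i:n} > ξ` for `i > N`, the remainder
`R = ((np-⌊np⌋)/(n(1-p))) (X_{⌊np⌋+1:n} - ξ)
   - (sign(N-⌊np⌋)/(n(1-p))) ∑_{i=(⌊np⌋∧N)+1}^{⌊np⌋∨N} (X_{i:n} - ξ)`
is nonnegative.  The 1-indexed sum over `(⌊np⌋∧N)+1 ≤ i ≤ ⌊np⌋∨N` is the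
0-indexed sum over `min ⌊np⌋ N ≤ j < max ⌊np⌋ N`. -/
theorem stmt6 (n : ℕ) (hn : 0 < n) (p ξ : ℝ) (hp : p ∈ Set.Ioo (0:ℝ) 1)
    (Y : Fin n → ℝ) (hmono : Monotone Y)
    (N : ℕ) (hNn : N ≤ n)
    (hsort : ∀ i : Fin n, ((i : ℕ) < N → Y i ≤ ξ) ∧ (N ≤ (i : ℕ) → ξ < Y i))
    (hk : ⌊(n:ℝ) * p⌋₊ < n) (R : ℝ)
    (hR : R = (((n:ℝ) * p - ⌊(n:ℝ) * p⌋₊) / ((n:ℝ) * (1-p)))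
            * (Y ⟨⌊(n:ℝ) * p⌋₊, hk⟩ - ξ)
        - ((((N : ℤ) - (⌊(n:ℝ) * p⌋₊ : ℤ)).sign : ℝ) / ((n:ℝ) * (1-p)))
            * ∑ i : Fin n,
                (if min ⌊(n:ℝ) * p⌋₊ N ≤ (i:ℕ) ∧ (i:ℕ) < max ⌊(n:ℝ) * p⌋₊ N
                 then Y i - ξ else 0)) :
    0 ≤ R :=
  stmt6_general n p ξ hp Y N hsort hk R hR
end
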